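/- arXiv:1505.06291 — 2 statements merged into one kernel-verified Lean document; each statement's English description precedes it below -/
import Mathlib

section
/- Let f be a transcendental entire function with Baker omitted value ∞. Then for every unbounded curve γ in ℂ, the image f(γ) is unbounded. -/
open Complex Metric Bornology Topology Filter Set OnePoint

/-- `z₀` is a pole of `f` : `f → ∞` near `z₀`. -/
def IsPole (f : ℂ → ℂ) (z₀ : ℂ) : Prop :=
  Tendsto f (𝓝[≠] z₀) (Bornology.cobounded ℂ)

/-- `f` is a transcendental meromorphic function on `ℂ`
(meromorphic everywhere and not a rational function). -/
def TranscMero (f : ℂ → ℂ) : Prop :=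
  MeromorphicOn f Set.univ ∧
    ¬ ∃ p q : Polynomial ℂ, q ≠ 0 ∧ ∀ z, f z * q.eval z = p.eval z

/-- `f` is a transcendental entire function. -/
def TranscEntire (f : ℂ → ℂ) : Prop :=
  Differentiable ℂ f ∧ ¬ ∃ p : Polynomial ℂ, f = fun z => p.eval z

/-- Preimage under the meromorphic function `f` of the ball `D_r(a)`
(poles, where the `ℂ`-valued representative carries a junk value, are excluded). -/
def preimBall (f : ℂ → ℂ) (a : ℂ) (r : ℝ) : Set ℂ :=
  {z | ¬ IsPole f z ∧ f z ∈ Metric.ball a r}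

/-- Every connected component of `S` is a bounded subset of `ℂ`. -/
def BoundedComponents (S : Set ℂ) : Prop :=
  ∀ z ∈ S, Bornology.IsBounded (connectedComponentIn S z)

/-- `S ⊆ ℂ` is infinitely connected: its complement has infinitely many
connected components. -/
def InfConnected (S : Set ℂ) : Prop :=
  {C : Set ℂ | ∃ z ∈ Sᶜ, C = connectedComponentIn Sᶜ z}.Infinite

/-- `a ∈ ℂ` is a Baker omitted value of the meromorphic function `f`:
`a` is omitted and, for all sufficiently small `r > 0`, every component of the
boundary of `f⁻¹(D_r(a))` is bounded. -/
def BakerOmittedValue (f : ℂ → ℂ) (a : ℂ) : Prop :=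
  (∀ z, ¬ IsPole f z → f z ≠ a) ∧
    ∃ r₀ > 0, ∀ r, 0 < r → r < r₀ →
      BoundedComponents (frontier (preimBall f a r))

/-- `∞` is a Baker omitted value of the entire function `f`: for every large
enough `R`, every component of the boundary of `f⁻¹({|w| > R})` is bounded. -/
def BakerOmittedValueInf (f : ℂ → ℂ) : Prop :=
  ∃ R₀ > 0, ∀ R, R₀ < R → BoundedComponents (frontier {z | R < ‖f z‖})

/-- Baker omitted value at a point of the Riemann sphere `ℂ ∪ {∞}`. -/
def BakerOmittedValueSph (f : ℂ → ℂ) (v : OnePoint ℂ) : Prop :=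
  (v = ∞ ∧ (∀ z, ¬ IsPole f z) ∧ BakerOmittedValueInf f) ∨
    (∃ a : ℂ, v = ↑a ∧ BakerOmittedValue f a)

/-- `b ∈ ℂ` is a (finite) asymptotic value of `f`. -/
def AsympValue (f : ℂ → ℂ) (b : ℂ) : Prop :=
  ∃ γ : ℝ → ℂ, ContinuousOn γ (Set.Ici 0) ∧
    Tendsto γ atTop (Bornology.cobounded ℂ) ∧
    Tendsto (fun t => f (γ t)) atTop (𝓝 b)

/-- `∞` is an asymptotic value of `f`. -/
def AsympValueInf (f : ℂ → ℂ) : Prop :=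
  ∃ γ : ℝ → ℂ, ContinuousOn γ (Set.Ici 0) ∧
    Tendsto γ atTop (Bornology.cobounded ℂ) ∧
    Tendsto (fun t => f (γ t)) atTop (Bornology.cobounded ℂ)

/-- uniform divergence to `∞` of a sequence of functions on `K`. -/
def UnifDiverges (F : ℕ → ℂ → ℂ) (K : Set ℂ) : Prop :=
  ∀ M : ℝ, ∀ᶠ n in atTop, ∀ z ∈ K, M < ‖F n z‖

/-- The iterates of `f` form a normal family on `U`: every subsequence has a
further subsequence converging locally uniformly on `U`, either to a finite
limit function or to `∞`. -/
def NormalOn (f : ℂ → ℂ) (U : Set ℂ) : Prop :=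
  ∀ s : ℕ → ℕ, StrictMono s → ∃ t : ℕ → ℕ, StrictMono t ∧
    ((∃ g : ℂ → ℂ, TendstoLocallyUniformlyOn (fun n => f^[s (t n)]) g atTop U) ∨
      (∀ K ⊆ U, IsCompact K → UnifDiverges (fun n => f^[s (t n)]) K))

/-- The Fatou set of `f`. -/
def FatouSet (f : ℂ → ℂ) : Set ℂ :=
  {z | ∃ U : Set ℂ, IsOpen U ∧ z ∈ U ∧ NormalOn f U}

/-- `U` is a Fatou component of `f`. -/
def IsFatouComponent (f : ℂ → ℂ) (U : Set ℂ) : Prop :=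
  ∃ z ∈ FatouSet f, U = connectedComponentIn (FatouSet f) z

/-- `U` surrounds `0`: `0` lies in a bounded complementary component of `U`. -/
def SurroundsZero (U : Set ℂ) : Prop :=
  0 ∉ U ∧ Bornology.IsBounded (connectedComponentIn Uᶜ 0)

/-- `U` is multiply connected: its complement has a bounded component. -/
def MultiplyConnected (U : Set ℂ) : Prop :=
  ∃ w ∉ U, Bornology.IsBounded (connectedComponentIn Uᶜ w)

/-- `U` is a Baker wandering domain of `f`. -/
def IsBakerWanderingDomain (f : ℂ → ℂ) (U : Set ℂ) : Prop :=
  ∃ z₀ ∈ FatouSet f, U = connectedComponentIn (FatouSet f) z₀ ∧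
    (∀ m n : ℕ, m ≠ n →
      connectedComponentIn (FatouSet f) (f^[m] z₀) ≠
        connectedComponentIn (FatouSet f) (f^[n] z₀)) ∧
    (∃ N : ℕ, ∀ n ≥ N,
      Bornology.IsBounded (connectedComponentIn (FatouSet f) (f^[n] z₀)) ∧
      MultiplyConnected (connectedComponentIn (FatouSet f) (f^[n] z₀)) ∧
      SurroundsZero (connectedComponentIn (FatouSet f) (f^[n] z₀))) ∧
    (∀ z ∈ U, Tendsto (fun n => f^[n] z) atTop (Bornology.cobounded ℂ))

/-- `U` is a completely invariant set for `f`. -/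
def CompletelyInvariant (f : ℂ → ℂ) (U : Set ℂ) : Prop :=
  f '' U ⊆ U ∧ f ⁻¹' U ⊆ U

/-!
Suppose `|f| ≤ M` on an unbounded curve `γ` and fix `R > max R₀ M`. Put `S = {R < |f|}` and
`F = ∂S`. By the maximum modulus principle every component of `S` is unbounded, and `γ` lies in
an unbounded component of the exterior of `S`; so the closed set `F`, all of whose components are
bounded, would separate two points `a` and `b` that both lie in unbounded components of `Fᶜ`.

This is impossible. By a Šura-Bura argument, `F` splits into a compact relatively clopen part
`F₀ ⊇ F ∩ B̄(0, ρ)`, where `ρ = max |a| |b|`, and a closed remainder outside `B̄(0, ρ)`. The points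
`a`, `b` can be joined avoiding `F₀` (through their components and a large circle) and, inside
`B̄(0, ρ)`, avoiding the remainder, so lifting these paths through `exp` gives a continuous
logarithm of `(z - a)/(z - b)` on `F ∪ {|z| ≥ r}` for some large `r`. Extending it to `ℂ` by
Tietze, one builds a nonvanishing continuous function on `ℂ` equal to `1/(z - a)` near `∞`; since
`ℂ` is simply connected it has a logarithm, which is absurd on a large circle around `a`.
-/

open scoped Real

theorem exists_isClopen_subset_of_connectedComponent_subset {X : Type*} [TopologicalSpace X]
    [T2Space X] [CompactSpace X] {x : X} {U : Set X} (hU : IsOpen U)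
    (h : connectedComponent x ⊆ U) : ∃ Z, IsClopen Z ∧ x ∈ Z ∧ Z ⊆ U := by
  rw [connectedComponent_eq_iInter_isClopen, ← disjoint_compl_right_iff_subset,
    disjoint_iff_inter_eq_empty, inter_comm] at h
  obtain ⟨t, ht⟩ := hU.isClosed_compl.isCompact.elim_finite_subfamily_closed _
    (fun s : {s : Set X // IsClopen s ∧ x ∈ s} => s.2.1.isClosed) h
  refine ⟨⋂ s ∈ t, s, isClopen_biInter_finset fun s _ => s.2.1, mem_iInter₂.2 fun s _ => s.2.2, ?_⟩
  rwa [inter_comm, ← disjoint_iff_inter_eq_empty, disjoint_compl_right_iff_subset] at ht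

section ProperSpace

variable {X : Type*} [MetricSpace X] [ProperSpace X] {F : Set X}

theorem IsClosed.exists_isOpen_isCompact_inter (hF : IsClosed F) {z : X} (hz : z ∈ F)
    (hb : IsBounded (connectedComponentIn F z)) :
    ∃ O, IsOpen O ∧ z ∈ O ∧ IsCompact (F ∩ O) := by
  obtain ⟨r, hr⟩ := hb.subset_ball z
  have hzr : z ∈ ball z r := hr (mem_connectedComponentIn hz)
  let K := F ∩ closedBall z r
  have : CompactSpace K := isCompact_iff_compactSpace.mp ((isCompact_closedBall z r).inter_left hF)
  have hzK : z ∈ K := ⟨hz, ball_subset_closedBall hzr⟩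
  obtain ⟨Z, hZ, hzZ, hZr⟩ := exists_isClopen_subset_of_connectedComponent_subset
    (x := ⟨z, hzK⟩) (isOpen_ball.preimage continuous_subtype_val) <| by
      rw [← image_subset_iff, ← connectedComponentIn_eq_image hzK]
      exact (connectedComponentIn_mono z inter_subset_left).trans hr
  obtain ⟨O, hO, hOZ⟩ := isOpen_induced_iff.mp hZ.isOpen
  refine ⟨O ∩ ball z r, hO.inter isOpen_ball, ⟨(hOZ ▸ hzZ : _ ∈ Subtype.val ⁻¹' O), hzr⟩, ?_⟩
  have : F ∩ (O ∩ ball z r) = Subtype.val '' Z := by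
    ext w
    constructor
    · rintro ⟨hwF, hwO, hwr⟩
      exact ⟨⟨w, hwF, ball_subset_closedBall hwr⟩, hOZ ▸ hwO, rfl⟩
    · rintro ⟨v, hvZ, rfl⟩
      exact ⟨v.2.1, (hOZ ▸ hvZ : v ∈ Subtype.val ⁻¹' O), hZr hvZ⟩
  rw [this]
  exact hZ.isClosed.isCompact.image continuous_subtype_val

theorem IsClosed.exists_isCompact_isClosed_diff (hF : IsClosed F)
    (hbc : ∀ z ∈ F, IsBounded (connectedComponentIn F z)) {K : Set X} (hK : IsCompact K) :
    ∃ F₀ ⊆ F, IsCompact F₀ ∧ IsClosed (F \ F₀) ∧ F ∩ K ⊆ F₀ := by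
  choose! O hO hzO hOF using fun z (hz : z ∈ F) => hF.exists_isOpen_isCompact_inter hz (hbc z hz)
  obtain ⟨t, htF, ht, hcover⟩ := (hK.inter_left hF).elim_finite_subcover_image
    (fun z hz => hO z hz.1) fun z hz => mem_biUnion hz (hzO z hz.1)
  refine ⟨F ∩ ⋃ z ∈ t, O z, inter_subset_left, ?_, ?_, fun z hz => ⟨hz.1, hcover hz⟩⟩
  · rw [inter_iUnion₂]
    exact ht.isCompact_biUnion fun z hz => hOF z (htF hz).1
  · rw [sdiff_self_inter]
    exact hF.sdiff (isOpen_biUnion fun z hz => hO z (htF hz).1)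

end ProperSpace

theorem frontier_connectedComponentIn_subset {α : Type*} [TopologicalSpace α]
    [LocallyConnectedSpace α] {S : Set α} (hS : IsOpen S) (x : α) :
    frontier (connectedComponentIn S x) ⊆ frontier S := by
  rw [hS.frontier_eq, hS.connectedComponentIn.frontier_eq]
  refine fun w ⟨hw, hwC⟩ => ⟨closure_mono (connectedComponentIn_subset S x) hw, fun hwS => hwC ?_⟩
  obtain ⟨y, hyw, hyx⟩ := mem_closure_iff.mp hw _ hS.connectedComponentIn
    (mem_connectedComponentIn hwS)
  rw [connectedComponentIn_eq hyx, ← connectedComponentIn_eq hyw]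
  exact mem_connectedComponentIn hwS

theorem mem_of_not_isBounded_connectedComponentIn {α : Type*} [TopologicalSpace α] [Bornology α]
    {S : Set α} {a : α} (ha : ¬ IsBounded (connectedComponentIn S a)) : a ∈ S := by
  by_contra h
  exact ha (connectedComponentIn_eq_empty h ▸ isBounded_empty)

theorem IsOpen.isPathConnected_connectedComponentIn {α : Type*} [TopologicalSpace α]
    [LocallyPathConnectedSpace α] {U : Set α} (hU : IsOpen U) {a : α} (ha : a ∈ U) :
    IsPathConnected (connectedComponentIn U a) :=
  hU.connectedComponentIn.isConnected_iff_isPathConnected.mp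
    (isConnected_connectedComponentIn_iff.mpr ha)

theorem continuousOn_piecewise_union {α β : Type*} [TopologicalSpace α] [TopologicalSpace β]
    {s t : Set α} [DecidablePred (· ∈ s)] {f g : α → β} (hs : IsClosed s) (ht : IsClosed t)
    (hst : Disjoint s t) (hf : ContinuousOn f s) (hg : ContinuousOn g t) :
    ContinuousOn (s.piecewise f g) (s ∪ t) :=
  (hf.congr fun _ hz => piecewise_eq_of_mem _ _ _ hz).union_of_isClosed
    (hg.congr fun _ hz => piecewise_eq_of_notMem _ _ _ (hst.notMem_of_mem_right hz)) hs ht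

theorem IsPreconnected.exists_norm_eq {E : Type*} [SeminormedAddCommGroup E] {U : Set E}
    (hU : IsPreconnected U) (hUb : ¬ IsBounded U) {a : E} (ha : a ∈ U) {r : ℝ} (hr : ‖a‖ ≤ r) :
    ∃ a' ∈ U, ‖a'‖ = r := by
  obtain ⟨b, hbU, hrb⟩ : ∃ b ∈ U, r < ‖b‖ := by
    simp only [isBounded_iff_forall_norm_le, not_exists, not_forall, not_le] at hUb
    simpa only [exists_prop] using hUb r
  exact hU.intermediate_value ha hbU continuous_norm.continuousOn ⟨hr, hrb.le⟩

section NormedSpace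

variable {E : Type*} [NormedAddCommGroup E] [NormedSpace ℝ E]

theorem joinedIn_union_sphere_union (hE : 1 < Module.rank ℝ E) {U W : Set E}
    (hU : IsPathConnected U) (hW : IsPathConnected W) (hUb : ¬ IsBounded U)
    (hWb : ¬ IsBounded W) {a b : E} (ha : a ∈ U) (hb : b ∈ W) {r : ℝ} (har : ‖a‖ ≤ r)
    (hbr : ‖b‖ ≤ r) : JoinedIn (U ∪ sphere 0 r ∪ W) a b := by
  obtain ⟨a', ha'U, ha'r⟩ := hU.isConnected.isPreconnected.exists_norm_eq hUb ha har
  obtain ⟨b', hb'W, hb'r⟩ := hW.isConnected.isPreconnected.exists_norm_eq hWb hb hbr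
  have hsphere := isPathConnected_sphere hE 0 ((norm_nonneg a).trans har)
  refine (((hU.joinedIn a ha a' ha'U).mono ?_).trans
    ((hsphere.joinedIn a' ?_ b' ?_).mono ?_)).trans ((hW.joinedIn b' hb'W b hb).mono ?_)
  · exact subset_union_left.trans subset_union_left
  · exact mem_sphere_zero_iff_norm.mpr ha'r
  · exact mem_sphere_zero_iff_norm.mpr hb'r
  · exact subset_union_right.trans subset_union_left
  · exact subset_union_right

theorem IsClosed.joinedIn_compl_of_subset_ball (hE : 1 < Module.rank ℝ E) {F K : Set E}
    (hF : IsClosed F) (hKF : K ⊆ F) {r : ℝ} (hKr : K ⊆ ball 0 r) {a b : E}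
    (ha : ¬ IsBounded (connectedComponentIn Fᶜ a))
    (hb : ¬ IsBounded (connectedComponentIn Fᶜ b)) (har : ‖a‖ ≤ r) (hbr : ‖b‖ ≤ r) :
    JoinedIn Kᶜ a b := by
  have haF := mem_of_not_isBounded_connectedComponentIn ha
  have hbF := mem_of_not_isBounded_connectedComponentIn hb
  have hcomp (c : E) : connectedComponentIn Fᶜ c ⊆ Kᶜ :=
    (connectedComponentIn_subset _ _).trans (compl_subset_compl.mpr hKF)
  refine (joinedIn_union_sphere_union hE
    (hF.isOpen_compl.isPathConnected_connectedComponentIn haF)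
    (hF.isOpen_compl.isPathConnected_connectedComponentIn hbF) ha hb
    (mem_connectedComponentIn haF) (mem_connectedComponentIn hbF) har hbr).mono ?_
  refine union_subset (union_subset (hcomp a) fun z hz hzK => ?_) (hcomp b)
  exact (hKr hzK).ne (mem_sphere.mp hz)

end NormedSpace

theorem JoinedIn.exists_continuousOn_exp_eq_div_sub {K : Set ℂ} {a b : ℂ}
    (h : JoinedIn Kᶜ b a) :
    ∃ θ : ℂ → ℂ, ContinuousOn θ K ∧ ∀ z ∈ K, exp (θ z) = (z - a) / (z - b) := by
  classical
  let γ := h.somePath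
  have hγ (t) (z : K) : (z : ℂ) - γ t ≠ 0 := sub_ne_zero.2 fun e => h.somePath_mem t (e ▸ z.2)
  have hb (z : K) : (z : ℂ) - b ≠ 0 := γ.source ▸ hγ 0 z
  let H : C(unitInterval × K, {w : ℂ // w ≠ 0}) :=
    ⟨fun p => ⟨(p.2 - γ p.1) / (p.2 - b), div_ne_zero (hγ _ _) (hb _)⟩,
      (((continuous_subtype_val.comp continuous_snd).sub (γ.continuous.comp continuous_fst)).div
        (by fun_prop) fun p => hb p.2).subtype_mk _⟩
  have H₀ (z : K) : H (0, z) = ⟨exp (ContinuousMap.const K 0 z), exp_ne_zero _⟩ := by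
    ext; simp [H, γ.source, div_self (hb z)]
  let L := isCoveringMap_exp.liftHomotopy H _ H₀
  refine ⟨fun z => if hz : z ∈ K then L (1, ⟨z, hz⟩) else 0, ?_, fun z hz => ?_⟩
  · rw [continuousOn_iff_continuous_domRestrict]
    convert L.continuous.comp (.prodMk_right 1) using 1
    ext; simp
  · have := congr_arg Subtype.val
      (congr_fun (isCoveringMap_exp.liftHomotopy_lifts H _ H₀) (1, ⟨z, hz⟩))
    simp only [Function.comp_apply, H, ContinuousMap.coe_mk, γ.target] at this
    simpa only [dif_pos hz] using this

theorem exists_continuous_exp_eq {A : Type*} [TopologicalSpace A] [SimplyConnectedSpace A]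
    [LocallyPathConnectedSpace A] {χ : A → ℂ} (hχ : Continuous χ) (h0 : ∀ x, χ x ≠ 0) :
    ∃ Λ : A → ℂ, Continuous Λ ∧ ∀ x, exp (Λ x) = χ x := by
  obtain ⟨x₀⟩ := (inferInstance : Nonempty A)
  obtain ⟨Λ, ⟨-, hΛ⟩, -⟩ := isCoveringMapOn_exp.existsUnique_continuousMap_lifts ⟨χ, hχ⟩
    (exp_log (h0 x₀)) h0
  exact ⟨Λ, Λ.continuous, congr_fun hΛ⟩

theorem not_exists_continuousOn_exp_eq_sub {c : ℂ} {r : ℝ} (hr : 0 < r) :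
    ¬ ∃ L : ℂ → ℂ, ContinuousOn L (sphere c r) ∧ ∀ z ∈ sphere c r, exp (L z) = z - c := by
  rintro ⟨L, hL, hexp⟩
  let h : ℝ → ℂ := fun t => L (circleMap c r t) - (Real.log r + t * I)
  have hcont : Continuous h :=
    (hL.comp_continuous (continuous_circleMap c r) (circleMap_mem_sphere c hr.le)).sub
      (by fun_prop)
  have hmaps : MapsTo h univ (AddSubgroup.zmultiples (2 * π * I)) := by
    intro t _
    have : exp (h t) = 1 := by
      rw [exp_sub, hexp _ (circleMap_mem_sphere c hr.le t), circleMap_sub_center, circleMap,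
        exp_add, ← ofReal_exp, Real.exp_log hr, zero_add]
      exact div_self (mul_ne_zero (by exact_mod_cast hr.ne') (exp_ne_zero _))
    obtain ⟨n, hn⟩ := exp_eq_one_iff.mp this
    exact ⟨n, by simp [hn]⟩
  -- `h` is continuous with values in `2πiℤ`, hence constant, but `h (2π) = h 0 - 2πi`.
  have := isPreconnected_univ.constant_of_mapsTo
    (isDiscrete_iff_discreteTopology.mpr (NormedSpace.discreteTopology_zmultiples _))
    hcont.continuousOn hmaps (mem_univ 0) (mem_univ (2 * π))
  have hper : circleMap c r (2 * π) = circleMap c r 0 := by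
    simpa using periodic_circleMap c r 0
  simp only [h, hper] at this
  push_cast at this
  have : (2 * π * I : ℂ) = 0 := by linear_combination this
  simp [Real.pi_ne_zero] at this

theorem IsClosed.exists_continuousOn_exp_eq_div_sub {F : Set ℂ} (hF : IsClosed F)
    (hbc : BoundedComponents F) {a b : ℂ} (ha : ¬ IsBounded (connectedComponentIn Fᶜ a))
    (hb : ¬ IsBounded (connectedComponentIn Fᶜ b)) :
    ∃ r : ℝ, ∃ θ : ℂ → ℂ, ContinuousOn θ (F ∪ {z | r ≤ ‖z‖}) ∧
      ∀ z ∈ F ∪ {z | r ≤ ‖z‖}, exp (θ z) = (z - a) / (z - b) := by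
  classical
  let ρ := max ‖a‖ ‖b‖
  obtain ⟨F₀, hF₀F, hF₀, hF₁, hFρ⟩ :=
    hF.exists_isCompact_isClosed_diff hbc (isCompact_closedBall 0 ρ)
  obtain ⟨r, hρr, hF₀r⟩ := hF₀.isBounded.subset_ball_lt ρ 0
  let G := (F \ F₀) ∪ {z | r ≤ ‖z‖}
  have hG : IsClosed G := hF₁.union (_root_.isClosed_le continuous_const continuous_norm)
  have hF₀G : Disjoint F₀ G := by
    refine disjoint_union_right.mpr ⟨disjoint_sdiff_right, disjoint_left.mpr fun z hz hrz => ?_⟩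
    exact (mem_ball_zero_iff.mp (hF₀r hz)).not_ge hrz
  obtain ⟨θ₀, hθ₀, hexp₀⟩ := JoinedIn.exists_continuousOn_exp_eq_div_sub <|
    hF.joinedIn_compl_of_subset_ball (by simp) hF₀F hF₀r hb ha
      ((le_max_right _ _).trans hρr.le) ((le_max_left _ _).trans hρr.le)
  have hGc : closedBall 0 ρ ⊆ Gᶜ := by
    rintro z hz (⟨hzF, hzF₀⟩ | hrz)
    · exact hzF₀ (hFρ ⟨hzF, hz⟩)
    · exact (mem_closedBall_zero_iff.mp hz).not_gt (hρr.trans_le hrz)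
  have ha_ρ : a ∈ closedBall 0 ρ := mem_closedBall_zero_iff.mpr (le_max_left _ _)
  have hb_ρ : b ∈ closedBall 0 ρ := mem_closedBall_zero_iff.mpr (le_max_right _ _)
  obtain ⟨θ₁, hθ₁, hexp₁⟩ := JoinedIn.exists_continuousOn_exp_eq_div_sub <|
    ((convex_closedBall (0 : ℂ) ρ).isPathConnected ⟨a, ha_ρ⟩).joinedIn b hb_ρ a ha_ρ |>.mono hGc
  have hT : F ∪ {z | r ≤ ‖z‖} = F₀ ∪ G := by
    rw [← union_assoc, union_sdiff_self, union_eq_self_of_subset_left hF₀F]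
  refine ⟨r, F₀.piecewise θ₀ θ₁, ?_⟩
  rw [hT]
  refine ⟨continuousOn_piecewise_union hF₀.isClosed hG hF₀G hθ₀ hθ₁, ?_⟩
  rintro z (hz | hz)
  · rw [piecewise_eq_of_mem _ _ _ hz, hexp₀ z hz]
  · rw [piecewise_eq_of_notMem _ _ _ (hF₀G.notMem_of_mem_right hz), hexp₁ z hz]

theorem mem_closure_of_continuousOn_exp_eq_div_sub {T Ω : Set ℂ} {a b : ℂ} {θ : ℂ → ℂ}
    (hT : IsClosed T) (hθ : ContinuousOn θ T) (hexp : ∀ z ∈ T, exp (θ z) = (z - a) / (z - b))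
    (hΩ : IsOpen Ω) (haΩ : a ∈ Ω) (hfr : frontier Ω ⊆ T) {r : ℝ} (hr : 0 < r)
    (hsphere : sphere a r ⊆ T) : b ∈ closure Ω := by
  classical
  by_contra hbΩ
  obtain ⟨θ', hθ'⟩ := ContinuousMap.exists_restrict_eq hT
    ⟨_, continuousOn_iff_continuous_domRestrict.mp hθ⟩
  have hθ'T : ∀ z ∈ T, exp (-θ' z) / (z - b) = (z - a)⁻¹ := fun z hz => by
    have hθz : θ' z = θ z := congr($hθ' ⟨z, hz⟩)
    have hne := div_ne_zero_iff.mp (hexp z hz ▸ exp_ne_zero _)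
    rw [exp_neg, hθz, hexp z hz]
    field_simp [hne.1, hne.2]
  let χ := Ω.piecewise (fun z => exp (-θ' z) / (z - b)) fun z => (z - a)⁻¹
  have hχ : Continuous χ := by
    refine continuous_piecewise (fun z hz => hθ'T z (hfr hz)) ?_ ?_
    · exact (θ'.continuous.neg.cexp.continuousOn).div (continuousOn_id.sub continuousOn_const)
        fun z hz => sub_ne_zero.2 (ne_of_mem_of_not_mem hz hbΩ)
    · rw [hΩ.isClosed_compl.closure_eq]
      exact (continuousOn_id.sub continuousOn_const).inv₀ fun z hz =>
        sub_ne_zero.2 (ne_of_mem_of_not_mem haΩ hz).symm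
  have hχ0 : ∀ z, χ z ≠ 0 := fun z => by
    by_cases hz : z ∈ Ω
    · simp only [χ, piecewise_eq_of_mem _ _ _ hz]
      exact div_ne_zero (exp_ne_zero _)
        (sub_ne_zero.2 (ne_of_mem_of_not_mem (subset_closure hz) hbΩ))
    · simp only [χ, piecewise_eq_of_notMem _ _ _ hz]
      exact inv_ne_zero (sub_ne_zero.2 (ne_of_mem_of_not_mem haΩ hz).symm)
  obtain ⟨Λ, hΛ, hexpΛ⟩ := exists_continuous_exp_eq hχ hχ0
  refine not_exists_continuousOn_exp_eq_sub (c := a) hr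
    ⟨fun z => -Λ z, hΛ.neg.continuousOn, fun z hz => ?_⟩
  have hχz : χ z = (z - a)⁻¹ := by
    by_cases hzΩ : z ∈ Ω
    · simp only [χ, piecewise_eq_of_mem _ _ _ hzΩ, hθ'T z (hsphere hz)]
    · simp only [χ, piecewise_eq_of_notMem _ _ _ hzΩ]
  rw [exp_neg, hexpΛ, hχz, inv_inv]

theorem IsClosed.mem_connectedComponentIn_compl_of_not_isBounded {F : Set ℂ} (hF : IsClosed F)
    (hbc : BoundedComponents F) {a b : ℂ} (ha : ¬ IsBounded (connectedComponentIn Fᶜ a))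
    (hb : ¬ IsBounded (connectedComponentIn Fᶜ b)) : b ∈ connectedComponentIn Fᶜ a := by
  obtain ⟨r, θ, hθ, hexp⟩ := hF.exists_continuousOn_exp_eq_div_sub hbc ha hb
  have hT : IsClosed (F ∪ {z | r ≤ ‖z‖}) :=
    hF.union (_root_.isClosed_le continuous_const continuous_norm)
  -- `(b - a) / (b - b) = 0` has no logarithm.
  have hbT : b ∉ F ∪ {z | r ≤ ‖z‖} := fun h =>
    (div_ne_zero_iff.mp (hexp b h ▸ exp_ne_zero _)).2 (sub_self b)
  have hbr : ‖b‖ < r := not_le.mp fun h => hbT (Or.inr h)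
  have hfrV : frontier (connectedComponentIn Fᶜ a) ⊆ F :=
    (frontier_connectedComponentIn_subset hF.isOpen_compl a).trans
      (frontier_compl F ▸ hF.frontier_subset)
  have hfar : closure {z : ℂ | r < ‖z‖} ⊆ {z | r ≤ ‖z‖} :=
    closure_lt_subset_le continuous_const continuous_norm
  have := mem_closure_of_continuousOn_exp_eq_div_sub hT hθ hexp
    (hF.isOpen_compl.connectedComponentIn.union (isOpen_lt continuous_const continuous_norm))
    (Or.inl (mem_connectedComponentIn (mem_of_not_isBounded_connectedComponentIn ha)))
    ((frontier_union_subset _ _).trans (union_subset_union (inter_subset_left.trans hfrV)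
      (inter_subset_right.trans (frontier_subset_closure.trans hfar))))
    (r := r + ‖a‖) (by linarith [norm_nonneg a, norm_nonneg b])
    fun z hz => Or.inr (show r ≤ ‖z‖ by linarith [norm_sub_le z a, mem_sphere_iff_norm.mp hz])
  rw [closure_union, closure_eq_self_union_frontier] at this
  rcases this with (hbV | hbV) | hbfar
  · exact hbV
  · exact absurd (Or.inl (hfrV hbV)) hbT
  · exact absurd (Or.inr (hfar hbfar)) hbT

theorem IsOpen.isBounded_connectedComponentIn_compl_closure {S : Set ℂ} (hS : IsOpen S)
    (hbc : BoundedComponents (frontier S)) {a : ℂ} (ha : ¬ IsBounded (connectedComponentIn S a))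
    (b : ℂ) : IsBounded (connectedComponentIn (closure S)ᶜ b) := by
  by_contra hb
  have hfr : (frontier S)ᶜ = S ∪ (closure S)ᶜ := by rw [hS.frontier_eq, compl_sdiff]
  have haS := mem_of_not_isBounded_connectedComponentIn ha
  have hbS := mem_of_not_isBounded_connectedComponentIn hb
  have hab := isClosed_frontier.mem_connectedComponentIn_compl_of_not_isBounded hbc
    (fun h => ha (h.subset (connectedComponentIn_mono _ (hfr ▸ subset_union_left))))
    (fun h => hb (h.subset (connectedComponentIn_mono _ (hfr ▸ subset_union_right))))
  rcases isPreconnected_connectedComponentIn.subset_or_subset hS isClosed_closure.isOpen_compl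
    (disjoint_compl_right_iff_subset.mpr subset_closure)
    ((connectedComponentIn_subset _ _).trans hfr.subset) with h | h
  · exact hbS (subset_closure (h hab))
  · exact h (mem_connectedComponentIn (hfr.symm.subset (Or.inl haS))) (subset_closure haS)

theorem Differentiable.not_isBounded_connectedComponentIn_lt_norm {E F : Type*}
    [NormedAddCommGroup E] [NormedSpace ℂ E] [Nontrivial E] [NormedAddCommGroup F]
    [NormedSpace ℂ F] {f : E → F} (hf : Differentiable ℂ f) {R : ℝ} {a : E} (ha : R < ‖f a‖) :
    ¬ IsBounded (connectedComponentIn {z | R < ‖f z‖} a) := by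
  intro hb
  have hS : IsOpen {z | R < ‖f z‖} := isOpen_lt continuous_const hf.continuous.norm
  have hfr : ∀ z ∈ frontier (connectedComponentIn {z | R < ‖f z‖} a), ‖f z‖ ≤ R := fun z hz =>
    not_lt.mp (hS.frontier_eq ▸ frontier_connectedComponentIn_subset hS a hz).2
  exact (Complex.norm_le_of_forall_mem_frontier_norm_le hb hf.diffContOnCl hfr
    (subset_closure (mem_connectedComponentIn ha))).not_gt ha

theorem TranscEntire.exists_lt_norm {f : ℂ → ℂ} (hf : TranscEntire f) (R : ℝ) :
    ∃ z, R < ‖f z‖ := by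
  by_contra! h
  refine hf.2 ⟨Polynomial.C (f 0), funext fun z => ?_⟩
  rw [Polynomial.eval_C]
  exact hf.1.apply_eq_apply_of_bounded
    (isBounded_iff_forall_norm_le.mpr ⟨R, forall_mem_range.mpr h⟩) z 0

/-- If `∞` is the Baker omitted value of the transcendental entire
function `f`, then the image under `f` of every unbounded curve is unbounded. -/
theorem stmt9 (f : ℂ → ℂ) (hf : TranscEntire f)
    (hbov : BakerOmittedValueInf f) :
    ∀ γ : ℝ → ℂ, ContinuousOn γ (Set.Ici 0) → Tendsto γ atTop (Bornology.cobounded ℂ) → ¬ Bornology.IsBounded (f '' (γ '' Set.Ici 0)) := by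
  intro γ hγc hγ hbdd
  obtain ⟨R₀, -, hR₀⟩ := hbov
  obtain ⟨M, hM⟩ := isBounded_iff_forall_norm_le.mp hbdd
  set R := max R₀ M + 1
  have hS : IsOpen {z | R < ‖f z‖} := isOpen_lt continuous_const hf.1.continuous.norm
  obtain ⟨a, ha⟩ := hf.exists_lt_norm R
  have hW := hS.isBounded_connectedComponentIn_compl_closure
    (hR₀ R (by linarith [le_max_left R₀ M])) (hf.1.not_isBounded_connectedComponentIn_lt_norm ha)
    (γ 0)
  have hγS : γ '' Ici 0 ⊆ (closure {z | R < ‖f z‖})ᶜ := by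
    rintro _ ⟨t, ht, rfl⟩ hcl
    have : R ≤ ‖f (γ t)‖ := closure_lt_subset_le continuous_const hf.1.continuous.norm hcl
    linarith [hM _ (mem_image_of_mem f ⟨t, ht, rfl⟩), le_max_right R₀ M]
  have hγW := (isPreconnected_Ici.image γ hγc).subset_connectedComponentIn
    ⟨0, self_mem_Ici, rfl⟩ hγS
  obtain ⟨t, ht, ht0⟩ :=
    ((hγ.eventually_mem (isBounded_def.mp (hW.subset hγW))).and (eventually_ge_atTop 0)).exists
  exact ht ⟨t, ht0, rfl⟩
end

section
/- Let f be a transcendental entire function such that the image of every unbounded curve under f is unbounded. Then every connected component of the preimage of any bounded simply connected domain under f is bounded. -/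
open Complex Metric Bornology Topology Filter Set OnePoint

/-! If the component `E` of `f⁻¹(B)` were unbounded, `f` would be bounded by some `M` on `E`,
so `closure E` lies in the open set `U = {|f| < M + 1}`. For `a < b`, connectedness of `E`
joins every point of `E` outside the sphere `|w| = b` inside `U ∩ {|w| > a}` to the compact set
`closure E ∩ {|w| = b} ⊆ U ∩ {|w| > a}`; so the far part of `E` meets only finitely many path
components of `U ∩ {|w| > a}`, and one of them contains an unbounded part of `E`. Choosing such
components for `a = a₀, a₀ + 1, a₀ + 2, …`, each meeting the previous one, and concatenating
paths through them gives a curve in `U` tending to `∞` along which `f` is bounded. -/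

section ConcatenatedPaths

variable {X : Type*} [TopologicalSpace X]

theorem locallyFinite_Icc_natCast_add_one :
    LocallyFinite fun n : ℕ => Icc (n : ℝ) (n + 1) := by
  intro t
  refine ⟨Iio (t + 1), Iio_mem_nhds (lt_add_one t), (finite_lt_nat (⌈t⌉₊ + 1)).subset ?_⟩
  rintro n ⟨s, ⟨hns, -⟩, hst⟩
  have : (n : ℝ) < ⌈t⌉₊ + 1 := by linarith [hst.out, Nat.le_ceil t]
  exact_mod_cast this

theorem exists_continuousOn_Ici_mem_of_joinedIn_succ {S : ℕ → Set X} {x : ℕ → X}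
    (h : ∀ n, JoinedIn (S n) (x n) (x (n + 1))) :
    ∃ γ : ℝ → X, ContinuousOn γ (Ici 0) ∧ ∀ t, γ t ∈ S ⌊t⌋₊ := by
  choose p hp using h
  let γ : ℝ → X := fun t => (p ⌊t⌋₊).extend (t - ⌊t⌋₊)
  have hγ : ∀ n : ℕ, EqOn γ (fun t => (p n).extend (t - n)) (Icc n (n + 1)) := by
    intro n t ⟨hnt, htn⟩
    rcases htn.lt_or_eq with htn | rfl
    · simp only [γ]
      rw [Nat.floor_eq_on_Ico n t ⟨hnt, htn⟩]
    · have : ⌊(n : ℝ) + 1⌋₊ = n + 1 := by exact_mod_cast Nat.floor_natCast (n + 1)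
      simp [γ, this]
  refine ⟨γ, ?_, fun t => ?_⟩
  · refine (locallyFinite_Icc_natCast_add_one.continuousOn_iUnion (fun _ => isClosed_Icc)
      fun n => ?_).mono fun t ht =>
        mem_iUnion.2 ⟨⌊t⌋₊, Nat.floor_le ht, (Nat.lt_floor_add_one t).le⟩
    exact ((p n).continuous_extend.comp (continuous_sub_right _)).continuousOn.congr (hγ n)
  · obtain ⟨s, hs⟩ : γ t ∈ range (p ⌊t⌋₊) :=
      (p ⌊t⌋₊).extend_range ▸ mem_range_self _
    exact hs ▸ hp _ s

end ConcatenatedPaths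

section EscapingCurve

variable {V : Type*} [NormedAddCommGroup V] [NormedSpace ℝ V] {E U A : Set V} {a b : ℝ}

theorem exists_mem_sphere_mem_pathComponentIn (hab : a < b) (hE : IsPreconnected E)
    (hU : IsOpen U) (hEU : E ⊆ U) {z₀ y : V} (hz₀ : z₀ ∈ E) (hz₀b : ‖z₀‖ < b)
    (hy : y ∈ E) (hyb : b ≤ ‖y‖) :
    ∃ p ∈ E ∩ sphere 0 b, p ∈ pathComponentIn (U ∩ {w | a < ‖w‖}) y := by
  set W := U ∩ {w | a < ‖w‖}
  have hW : IsOpen W := hU.inter (isOpen_lt continuous_const continuous_norm)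
  by_contra! hsphere
  set C := pathComponentIn W y
  have hyC : y ∈ C := mem_pathComponentIn_self ⟨hEU hy, hab.trans_le hyb⟩
  have hnorm_ne : ∀ e ∈ E, e ∈ C → ‖e‖ ≠ b := fun e he heC heb =>
    hsphere e ⟨he, mem_sphere_zero_iff_norm.2 heb⟩ heC
  -- The points of `E ∩ C` beyond the sphere and the rest of `E` would disconnect `E`.
  obtain ⟨w, -, ⟨hwC, hwb⟩, hw⟩ := hE (C ∩ {w | b < ‖w‖})
    ({w | ‖w‖ < b} ∪ ⋃ x ∈ W \ C, pathComponentIn W x)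
    ((hW.pathComponentIn y).inter (isOpen_lt continuous_const continuous_norm))
    ((isOpen_lt continuous_norm continuous_const).union
      (isOpen_biUnion fun x _ => hW.pathComponentIn x))
    (fun e he => by
      by_cases heC : e ∈ C
      · rcases (hnorm_ne e he heC).lt_or_gt with h | h
        · exact Or.inr (Or.inl h)
        · exact Or.inl ⟨heC, h⟩
      · rcases lt_or_ge ‖e‖ b with h | h
        · exact Or.inr (Or.inl h)
        · have heW : e ∈ W := ⟨hEU he, hab.trans_le h⟩
          exact Or.inr (Or.inr (mem_biUnion ⟨heW, heC⟩ (mem_pathComponentIn_self heW))))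
    ⟨y, hy, hyC, (hnorm_ne y hy hyC).symm.lt_of_le hyb⟩
    ⟨z₀, hz₀, Or.inl hz₀b⟩
  rcases hw with hw | hw
  · exact lt_asymm (α := ℝ) hwb hw
  · obtain ⟨x, ⟨-, hxC⟩, hxw⟩ := mem_iUnion₂.1 hw
    exact hxC (hwC.trans hxw.symm)

variable [ProperSpace V]

theorem exists_finset_subset_biUnion_pathComponentIn (hab : a < b) (hE : IsPreconnected E)
    (hU : IsOpen U) (hEU : closure E ⊆ U) {z₀ : V} (hz₀ : z₀ ∈ E) (hz₀b : ‖z₀‖ < b) :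
    ∃ t : Finset V,
      E ∩ {w | b ≤ ‖w‖} ⊆ ⋃ x ∈ t, pathComponentIn (U ∩ {w | a < ‖w‖}) x := by
  set W := U ∩ {w | a < ‖w‖}
  have hW : IsOpen W := hU.inter (isOpen_lt continuous_const continuous_norm)
  have hKW : closure E ∩ sphere 0 b ⊆ W := fun k ⟨hkE, hkb⟩ =>
    ⟨hEU hkE, hab.trans_eq (mem_sphere_zero_iff_norm.1 hkb).symm⟩
  obtain ⟨t, -, hKt⟩ := ((isCompact_sphere 0 b).inter_left isClosed_closure).elim_nhds_subcover
    (pathComponentIn W) fun k hk => pathComponentIn_mem_nhds (hW.mem_nhds (hKW hk))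
  refine ⟨t, fun y ⟨hy, hyb⟩ => ?_⟩
  obtain ⟨p, ⟨hpE, hpb⟩, hyp⟩ :=
    exists_mem_sphere_mem_pathComponentIn hab hE hU (subset_closure.trans hEU) hz₀ hz₀b hy hyb
  obtain ⟨x, hx, hxp⟩ := mem_iUnion₂.1 (hKt ⟨subset_closure hpE, hpb⟩)
  exact mem_iUnion₂.2 ⟨x, hx, hxp.trans hyp.symm⟩

theorem exists_not_isBounded_inter_pathComponentIn (hab : a < b) (hE : IsPreconnected E)
    (hU : IsOpen U) (hEU : closure E ⊆ U) {z₀ : V} (hz₀ : z₀ ∈ E) (hz₀b : ‖z₀‖ < b)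
    (hAE : A ⊆ E) (hA : ¬ IsBounded A) :
    ∃ y ∈ A, ¬ IsBounded (A ∩ pathComponentIn (U ∩ {w | a < ‖w‖}) y) := by
  by_contra! hbdd
  obtain ⟨t, ht⟩ := exists_finset_subset_biUnion_pathComponentIn hab hE hU hEU hz₀ hz₀b
  have hbdd' : ∀ x, IsBounded (A ∩ pathComponentIn (U ∩ {w | a < ‖w‖}) x) := by
    intro x
    rcases (A ∩ pathComponentIn _ x).eq_empty_or_nonempty with h | ⟨y, hyA, hyx⟩
    · exact h ▸ isBounded_empty
    · exact pathComponentIn_congr hyx ▸ hbdd y hyA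
  refine hA (((isBounded_closedBall (x := (0 : V)) (r := b)).union
    ((isBounded_biUnion_finset t).2 fun x _ => hbdd' x)).subset fun y hy => ?_)
  rcases le_or_gt ‖y‖ b with hyb | hyb
  · exact Or.inl (mem_closedBall_zero_iff.2 hyb)
  · obtain ⟨x, hx, hyx⟩ := mem_iUnion₂.1 (ht ⟨hAE hy, hyb.le⟩)
    exact Or.inr (mem_iUnion₂.2 ⟨x, hx, hy, hyx⟩)

theorem IsPreconnected.exists_tendsto_cobounded_mem_of_closure_subset (hE : IsPreconnected E)
    (hEb : ¬ IsBounded E) (hU : IsOpen U) (hEU : closure E ⊆ U) :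
    ∃ γ : ℝ → V, ContinuousOn γ (Ici 0) ∧ Tendsto γ atTop (cobounded V) ∧ ∀ t, γ t ∈ U := by
  obtain ⟨z₀, hz₀⟩ : E.Nonempty := nonempty_iff_ne_empty.2 fun h => hEb (h ▸ isBounded_empty)
  set W : ℕ → Set V := fun n => U ∩ {w | ‖z₀‖ + n < ‖w‖}
  have hz₀_lt : ∀ n : ℕ, ‖z₀‖ < ‖z₀‖ + n + 1 := fun n => by
    linarith [n.cast_nonneg (α := ℝ)]
  obtain ⟨y₀, -, hy₀⟩ := exists_not_isBounded_inter_pathComponentIn (a := ‖z₀‖ + (0 : ℕ))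
    (lt_add_one _) hE hU hEU hz₀ (hz₀_lt 0) subset_rfl hEb
  have hstep : ∀ n y, ¬ IsBounded (E ∩ pathComponentIn (W n) y) →
      ∃ y', ¬ IsBounded (E ∩ pathComponentIn (W (n + 1)) y') ∧ JoinedIn (W n) y y' := by
    intro n y hy
    obtain ⟨y', ⟨-, hyy'⟩, hy'⟩ := exists_not_isBounded_inter_pathComponentIn
      (a := ‖z₀‖ + (n + 1 : ℕ)) (lt_add_one _) hE hU hEU hz₀ (hz₀_lt (n + 1))
      inter_subset_left hy
    exact ⟨y', fun h => hy' (h.subset (inter_subset_inter_left _ inter_subset_left)), hyy'⟩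
  choose! next hnext using hstep
  set x : ℕ → V := fun n => Nat.rec y₀ next n
  have hx : ∀ n, ¬ IsBounded (E ∩ pathComponentIn (W n) (x n)) := fun n => by
    induction n with
    | zero => exact hy₀
    | succ n ih => exact (hnext n (x n) ih).1
  obtain ⟨γ, hγc, hγW⟩ :=
    exists_continuousOn_Ici_mem_of_joinedIn_succ fun n => (hnext n (x n) (hx n)).2
  refine ⟨γ, hγc, ?_, fun t => (hγW t).1⟩
  rw [← tendsto_norm_atTop_iff_cobounded]
  refine tendsto_atTop_mono (fun t => ?_) (tendsto_atTop_add_const_right _ (-1) tendsto_id)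
  have hγt : ‖z₀‖ + ⌊t⌋₊ < ‖γ t‖ := (hγW t).2
  show t + -1 ≤ ‖γ t‖
  linarith [Nat.lt_floor_add_one t, norm_nonneg z₀]

end EscapingCurve

theorem stmt10_general (f : ℂ → ℂ) (hf : TranscEntire f)
    (hcurve : ∀ γ : ℝ → ℂ, ContinuousOn γ (Set.Ici 0) → Tendsto γ atTop (Bornology.cobounded ℂ) → ¬ Bornology.IsBounded (f '' (γ '' Set.Ici 0)))
    (B : Set ℂ) (hBb : Bornology.IsBounded B) :
    ∀ z ∈ f ⁻¹' B, Bornology.IsBounded (connectedComponentIn (f ⁻¹' B) z) := by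
  intro z _
  by_contra hE
  obtain ⟨M, hM⟩ := hBb.subset_closedBall 0
  have hfc : Continuous f := hf.1.continuous
  have hEU : closure (connectedComponentIn (f ⁻¹' B) z) ⊆ f ⁻¹' ball 0 (M + 1) :=
    calc closure (connectedComponentIn (f ⁻¹' B) z)
        ⊆ f ⁻¹' closedBall 0 M := closure_minimal
          ((connectedComponentIn_subset _ _).trans (preimage_mono hM))
          (isClosed_closedBall.preimage hfc)
      _ ⊆ f ⁻¹' ball 0 (M + 1) := preimage_mono (closedBall_subset_ball (lt_add_one M))
  obtain ⟨γ, hγc, hγ, hγU⟩ := IsPreconnected.exists_tendsto_cobounded_mem_of_closure_subset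
    isPreconnected_connectedComponentIn hE (isOpen_ball.preimage hfc) hEU
  refine hcurve γ hγc hγ ((isBounded_ball (x := 0) (r := M + 1)).subset ?_)
  rintro _ ⟨_, ⟨t, -, rfl⟩, rfl⟩
  exact hγU t

/-- If every unbounded curve has unbounded image under the
transcendental entire function `f`, then every component of the preimage of a
bounded simply connected domain is bounded. -/
theorem stmt10 (f : ℂ → ℂ) (hf : TranscEntire f)
    (hcurve : ∀ γ : ℝ → ℂ, ContinuousOn γ (Set.Ici 0) → Tendsto γ atTop (Bornology.cobounded ℂ) → ¬ Bornology.IsBounded (f '' (γ '' Set.Ici 0)))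
    (B : Set ℂ) (hBo : IsOpen B) (hBb : Bornology.IsBounded B)
    (hBsc : SimplyConnectedSpace ↥B) :
    ∀ z ∈ f ⁻¹' B, Bornology.IsBounded (connectedComponentIn (f ⁻¹' B) z) :=
  stmt10_general f hf hcurve B hBb
end
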